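/- Finite termination of the outer approximation algorithm (Theorem 1): let ε ≥ 0 and suppose given sequences z_t ∈ Z (t = 0, 1, 2, …), Π_t = {z_0, …, z_t}, U_t = min_{s ≤ t} f*(z_s), functions Φ_t : ℝ^{Nn} × ℝ^{Nm} → ℝ, and points (x⁺_t, z_{t+1}) such that for every t: (i) for all z ∈ Π_t, inf { Φ_t(x, z) : x ∈ X, A x = b } = f*(z); and (ii) (x⁺_t, z_{t+1}) minimizes Φ_t over { (x, z) ∈ X × Z : A x = b }. Then there exists an index t < |Z| (the cardinality of Z) such that the termination criterion U_t − Φ_t(x⁺_t, z_{t+1}) ≤ ε holds. -/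
import Mathlib


open Matrix Finset

/-- Coercion of an integer vector to the corresponding real vector. -/
noncomputable def zR {m : ℕ} (ζ : Fin m → ℤ) : Fin m → ℝ := fun j => (ζ j : ℝ)

/-- Coercion of a block integer vector to the corresponding block real vector. -/
noncomputable def zRN {N m : ℕ} (z : Fin N → Fin m → ℤ) : Fin N → Fin m → ℝ :=
  fun i => zR (z i)

/-- Flattening of a block vector `x ∈ (ℝ^n)^N` into a vector in `ℝ^{Nn}`. -/
def flat {N n : ℕ} (x : Fin N → Fin n → ℝ) : Fin N × Fin n → ℝ := fun q => x q.1 q.2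

/-- **Finite termination of the outer approximation algorithm (Theorem 1):**
given iterates `z_t ∈ Z`, `Π_t = {z_0, …, z_t}`, upper bounds
`U_t = min_{s ≤ t} f*(z_s)`, lower bounding functions `Φ_t` that are tight on `Π_t`,
and MILP minimizers `(x⁺_t, z_{t+1})` of `Φ_t` over `{(x,z) ∈ X × Z : A x = b}`,
there is a `t < |Z|` with `U_t − Φ_t(x⁺_t, z_{t+1}) ≤ ε`. -/
theorem stmt_6
    (N n m p : ℕ) (hN : 0 < N) (hn : 0 < n) (hm : 0 < m) (hp : 0 < p)
    (X : Fin N → Set (Fin n → ℝ))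
    (hXpoly : ∀ i, ∃ V : Finset (Fin n → ℝ), X i = convexHull ℝ (V : Set (Fin n → ℝ)))
    (hXne : ∀ i, (X i).Nonempty)
    (Z : Fin N → Set (Fin m → ℤ))
    (hZne : ∀ i, (Z i).Nonempty) (hZfin : ∀ i, (Z i).Finite)
    (f : Fin N → (Fin n → ℝ) → (Fin m → ℝ) → ℝ)
    (hconv : ∀ i, ConvexOn ℝ (convexHull ℝ ((X i) ×ˢ (zR '' (Z i))))
        (fun q : (Fin n → ℝ) × (Fin m → ℝ) => f i q.1 q.2))
    (A : Matrix (Fin p) (Fin N × Fin n) ℝ) (b : Fin p → ℝ)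
    (hfeas : ∃ x : Fin N → Fin n → ℝ, (∀ i, x i ∈ X i) ∧ A.mulVec (flat x) = b)
    (fstar : (Fin N → Fin m → ℤ) → ℝ)
    (hfstar : ∀ w : Fin N → Fin m → ℤ, fstar w =
      sInf {r : ℝ | ∃ x : Fin N → Fin n → ℝ, (∀ i, x i ∈ X i) ∧
        A.mulVec (flat x) = b ∧ r = ∑ i, f i (x i) (zR (w i))})
    (ε : ℝ) (hε : 0 ≤ ε)
    -- the sequences of the algorithm
    (z : ℕ → Fin N → Fin m → ℤ) (hz : ∀ t i, z t i ∈ Z i)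
    (U : ℕ → ℝ)
    (hU : ∀ t, U t = (Finset.range (t + 1)).inf'
      (Finset.nonempty_range_iff.mpr t.succ_ne_zero) (fun s => fstar (z s)))
    (Φ : ℕ → (Fin N → Fin n → ℝ) → (Fin N → Fin m → ℝ) → ℝ)
    (xp : ℕ → Fin N → Fin n → ℝ)
    -- (i) tightness of `Φ_t` on `Π_t = {z_0, …, z_t}`
    (htight : ∀ t, ∀ s ≤ t,
      sInf {r : ℝ | ∃ x : Fin N → Fin n → ℝ, (∀ i, x i ∈ X i) ∧
        A.mulVec (flat x) = b ∧ r = Φ t x (zRN (z s))} = fstar (z s))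
    -- (ii) `(x⁺_t, z_{t+1})` minimizes `Φ_t` over `{(x,z) ∈ X × Z : A x = b}`
    (hxp : ∀ t, (∀ i, xp t i ∈ X i) ∧ A.mulVec (flat (xp t)) = b)
    (hmin : ∀ t, ∀ (x : Fin N → Fin n → ℝ) (w : Fin N → Fin m → ℤ),
      (∀ i, x i ∈ X i) → (∀ i, w i ∈ Z i) → A.mulVec (flat x) = b →
      Φ t (xp t) (zRN (z (t + 1))) ≤ Φ t x (zRN w)) :
    ∃ t : ℕ, t < Set.ncard {w : Fin N → Fin m → ℤ | ∀ i, w i ∈ Z i} ∧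
      U t - Φ t (xp t) (zRN (z (t + 1))) ≤ ε := by
  by_contra hcon
  push_neg at hcon
  set S : Set (Fin N → Fin m → ℤ) := {w | ∀ i, w i ∈ Z i} with hS
  have hSfin : S.Finite := by
    have hEq : S = Set.pi Set.univ (fun i => Z i) := by
      ext w; simp [hS, Set.mem_pi]
    rw [hEq]
    exact Set.Finite.pi (fun i => hZfin i)
  set K := S.ncard with hK
  have key : ∀ t, t < K → ∀ s ≤ t, z (t + 1) ≠ z s := by
    intro t ht s hs heq
    have hP := hcon t ht
    obtain ⟨hxmem, hxeq⟩ := hxp t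
    set r0 := Φ t (xp t) (zRN (z (t + 1))) with hr0
    have hbdd : ∀ r ∈ {r : ℝ | ∃ x : Fin N → Fin n → ℝ, (∀ i, x i ∈ X i) ∧
        A.mulVec (flat x) = b ∧ r = Φ t x (zRN (z s))}, r0 ≤ r := by
      rintro r ⟨x, hx, hxb, rfl⟩
      exact hmin t x (z s) hx (hz s) hxb
    have hmem : r0 ∈ {r : ℝ | ∃ x : Fin N → Fin n → ℝ, (∀ i, x i ∈ X i) ∧
        A.mulVec (flat x) = b ∧ r = Φ t x (zRN (z s))} :=
      ⟨xp t, hxmem, hxeq, by rw [hr0, heq]⟩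
    have h1 : sInf {r : ℝ | ∃ x : Fin N → Fin n → ℝ, (∀ i, x i ∈ X i) ∧
        A.mulVec (flat x) = b ∧ r = Φ t x (zRN (z s))} ≤ r0 :=
      csInf_le ⟨r0, hbdd⟩ hmem
    rw [htight t s hs] at h1
    have h2 : U t ≤ fstar (z s) := by
      rw [hU t]
      exact Finset.inf'_le _ (Finset.mem_range.mpr (Nat.lt_succ_of_le hs))
    linarith
  have hinj : Set.InjOn z ((Finset.range (K + 1) : Finset ℕ) : Set ℕ) := by
    intro a ha b hb hab
    simp only [Finset.coe_range, Set.mem_Iio] at ha hb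
    by_contra hne
    rcases Nat.lt_or_ge a b with h | h
    · cases b with
      | zero => omega
      | succ b' => exact key b' (by omega) a (by omega) hab.symm
    · cases a with
      | zero => omega
      | succ a' => exact key a' (by omega) b (by omega) hab
  have hsub : (Finset.range (K + 1)).image z ⊆ hSfin.toFinset := by
    intro w hw
    simp only [Finset.mem_image] at hw
    obtain ⟨t, _, rfl⟩ := hw
    simp only [Set.Finite.mem_toFinset]
    exact hz t
  have hcard : K + 1 ≤ K := by
    calc K + 1 = ((Finset.range (K + 1)).image z).card := by
          rw [Finset.card_image_of_injOn hinj, Finset.card_range]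
      _ ≤ hSfin.toFinset.card := Finset.card_le_card hsub
      _ = K := by exact (Set.ncard_eq_toFinset_card S hSfin).symm
  omega
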